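/- For a positive half-integer β (i.e., β = j + 1/2 for a nonnegative integer j), ∑_{k=1}^{2β} ψ₀(k−β)/k = (1/2)ψ₁(β+1) + ψ₀(β+1)·(ψ₀(2β+1) − ψ₀(1)) − (3/2)ψ₁(1). -/

import Mathlib

open Finset Real

/-- The digamma function ψ₀(x) = d/dx ln Γ(x). -/
noncomputable def digamma (x : ℝ) : ℝ := deriv (fun y => Real.log (Real.Gamma y)) x

/-- The trigamma function ψ₁(x) = d²/dx² ln Γ(x). -/
noncomputable def trigamma (x : ℝ) : ℝ := deriv digamma x

open Filter Set Topology

lemma isOpen_nonpole : IsOpen {x : ℝ | ∀ m : ℕ, x ≠ -m} := by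
  have hc : IsClosed ((Int.cast '' (Set.Iic (0:ℤ))) : Set ℝ) :=
    Int.isClosedEmbedding_coe_real.isClosedMap _ (isClosed_discrete _)
  have he : {x : ℝ | ∀ m : ℕ, x ≠ -m} = ((Int.cast '' (Set.Iic (0:ℤ))) : Set ℝ)ᶜ := by
    ext x
    simp only [Set.mem_setOf_eq, Set.mem_compl_iff, Set.mem_image, Set.mem_Iic, not_exists]
    constructor
    · rintro h n ⟨hn, rfl⟩
      have h2 : ((-n).toNat : ℤ) = -n := Int.toNat_of_nonneg (by omega)
      have h3 : (((-n).toNat : ℕ) : ℝ) = -(n : ℝ) := by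
        exact_mod_cast congrArg (fun z : ℤ => (z : ℝ)) h2
      exact h (-n).toNat (by rw [h3]; ring)
    · intro h m hm
      refine h (-(m:ℤ)) ⟨by omega, ?_⟩
      push_cast
      linarith
  rw [he]
  exact hc.isOpen_compl

lemma eventually_nonpole {x : ℝ} (hx : ∀ m : ℕ, x ≠ -m) :
    ∀ᶠ y in 𝓝 x, ∀ m : ℕ, y ≠ -(m:ℝ) := by
  have hmem : x ∈ {x : ℝ | ∀ m : ℕ, x ≠ -m} := hx
  exact eventually_of_mem (isOpen_nonpole.mem_nhds hmem) (fun _ hy => hy)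

lemma Complex.analyticAt_Gamma' {s : ℂ} (hs : ∀ m : ℕ, s ≠ -m) :
    AnalyticAt ℂ Complex.Gamma s := by
  have h1 : AnalyticAt ℂ (fun z => (Complex.Gamma z)⁻¹) s :=
    Complex.differentiable_one_div_Gamma.differentiableOn.analyticAt univ_mem
  have h2 : Complex.Gamma s ≠ 0 := Complex.Gamma_ne_zero hs
  refine (h1.inv (inv_ne_zero h2)).congr ?_
  filter_upwards [h1.continuousAt.eventually_ne (inv_ne_zero h2)] with z hz
  simp only [Pi.inv_apply, inv_inv]

lemma analyticAt_realGamma {x : ℝ} (hx : ∀ m : ℕ, x ≠ -m) :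
    AnalyticAt ℝ Real.Gamma x := by
  have hs : ∀ m : ℕ, (x:ℂ) ≠ -m := by
    intro m h
    exact hx m (by exact_mod_cast h)
  have h1 : AnalyticAt ℝ (fun y : ℝ => (Complex.Gamma (y:ℂ)).re) x :=
    (Complex.reCLM.analyticAt _).comp
      (((Complex.analyticAt_Gamma' hs).restrictScalars).comp (Complex.ofRealCLM.analyticAt x))
  refine h1.congr (Eventually.of_forall fun y => ?_)
  simp only [Complex.Gamma_ofReal, Complex.ofReal_re]

lemma AnalyticAt.deriv'' {f : ℝ → ℝ} {x : ℝ} (h : AnalyticAt ℝ f x) :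
    AnalyticAt ℝ (deriv f) x :=
  (((ContinuousLinearMap.apply ℝ ℝ (1:ℝ)).analyticAt _).comp h.fderiv).congr
    (Eventually.of_forall fun _ => fderiv_apply_one_eq_deriv)

lemma digamma_eq {x : ℝ} (hx : ∀ m : ℕ, x ≠ -m) :
    digamma x = deriv Real.Gamma x / Real.Gamma x :=
  deriv.log (Real.differentiableAt_Gamma hx) (Real.Gamma_ne_zero hx)

lemma analyticAt_digamma {x : ℝ} (hx : ∀ m : ℕ, x ≠ -m) :
    AnalyticAt ℝ digamma x := by
  refine (((analyticAt_realGamma hx).deriv'').div (analyticAt_realGamma hx)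
    (Real.Gamma_ne_zero hx)).congr ?_
  filter_upwards [eventually_nonpole hx] with y hy
  exact (digamma_eq hy).symm

lemma hasDerivAt_logGamma {x : ℝ} (hx : ∀ m : ℕ, x ≠ -m) :
    HasDerivAt (fun y => Real.log (Real.Gamma y)) (digamma x) x :=
  ((Real.differentiableAt_Gamma hx).log (Real.Gamma_ne_zero hx)).hasDerivAt

lemma hasDerivAt_digamma {x : ℝ} (hx : ∀ m : ℕ, x ≠ -m) :
    HasDerivAt digamma (trigamma x) x :=
  (analyticAt_digamma hx).differentiableAt.hasDerivAt

lemma digamma_add_one {x : ℝ} (hx : ∀ m : ℕ, x ≠ -m) :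
    digamma (x + 1) = digamma x + x⁻¹ := by
  have hx0 : x ≠ 0 := by simpa using hx 0
  have h1 : digamma (x + 1) = deriv (fun y => Real.log (Real.Gamma (y + 1))) x :=
    (deriv_comp_add_const _ 1 x).symm
  rw [h1]
  have heq : (fun y => Real.log (Real.Gamma (y + 1)))
      =ᶠ[𝓝 x] fun y => Real.log y + Real.log (Real.Gamma y) := by
    filter_upwards [eventually_nonpole hx] with y hy
    have hy0 : y ≠ 0 := by simpa using hy 0
    rw [Real.Gamma_add_one hy0, Real.log_mul hy0 (Real.Gamma_ne_zero hy)]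
  rw [heq.deriv_eq, HasDerivAt.deriv (f := fun y => Real.log y + Real.log (Real.Gamma y))
    ((Real.hasDerivAt_log hx0).add (hasDerivAt_logGamma hx))]
  ring

lemma trigamma_add_one {x : ℝ} (hx : ∀ m : ℕ, x ≠ -m) :
    trigamma (x + 1) = trigamma x - (x ^ 2)⁻¹ := by
  have hx0 : x ≠ 0 := by simpa using hx 0
  have h1 : trigamma (x + 1) = deriv (fun y => digamma (y + 1)) x :=
    (deriv_comp_add_const _ 1 x).symm
  rw [h1]
  have heq : (fun y => digamma (y + 1)) =ᶠ[𝓝 x] fun y => digamma y + y⁻¹ := by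
    filter_upwards [eventually_nonpole hx] with y hy
    exact digamma_add_one hy
  rw [heq.deriv_eq, HasDerivAt.deriv (f := fun y => digamma y + y⁻¹)
    ((hasDerivAt_digamma hx).add (hasDerivAt_inv hx0))]
  ring

lemma pos_nonpole {x : ℝ} (hx : 0 < x) : ∀ m : ℕ, x ≠ -(m:ℝ) := by
  intro m h
  have : (0:ℝ) ≤ m := Nat.cast_nonneg m
  rw [h] at hx
  linarith

lemma digamma_dup {x : ℝ} (hx : 0 < x) :
    digamma x + digamma (x + 1/2) = 2 * digamma (2 * x) - 2 * Real.log 2 := by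
  have k1 := pos_nonpole hx
  have k2 := pos_nonpole (by linarith : (0:ℝ) < x + 1/2)
  have k3 := pos_nonpole (by linarith : (0:ℝ) < 2 * x)
  have hL : HasDerivAt (fun y => Real.log (Real.Gamma y) + Real.log (Real.Gamma (y + 1/2)))
      (digamma x + digamma (x + 1/2)) x :=
    (hasDerivAt_logGamma k1).add (HasDerivAt.comp_add_const x (1/2) (hasDerivAt_logGamma k2))
  have h2y : HasDerivAt (fun y : ℝ => 2 * y) 2 x := by
    simpa using (hasDerivAt_id x).const_mul (2:ℝ)
  have hR1 : HasDerivAt (fun y => Real.log (Real.Gamma (2 * y))) (digamma (2*x) * 2) x :=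
    (hasDerivAt_logGamma k3).comp x h2y
  have hR2 : HasDerivAt (fun y : ℝ => (1 - 2*y) * Real.log 2 + Real.log (Real.sqrt π))
      (-2 * Real.log 2) x := by
    have : HasDerivAt (fun y : ℝ => 1 - 2*y) (-2) x := by
      simpa using (h2y.const_sub 1)
    simpa using (this.mul_const (Real.log 2)).add_const (Real.log (Real.sqrt π))
  have hR : HasDerivAt (fun y => Real.log (Real.Gamma (2 * y)) + ((1 - 2*y) * Real.log 2
      + Real.log (Real.sqrt π))) _ x := hR1.add hR2
  have heq : (fun y => Real.log (Real.Gamma y) + Real.log (Real.Gamma (y + 1/2)))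
      =ᶠ[𝓝 x] fun y => Real.log (Real.Gamma (2 * y)) + ((1 - 2*y) * Real.log 2
        + Real.log (Real.sqrt π)) := by
    filter_upwards [eventually_gt_nhds hx] with y hy
    have e1 := Real.Gamma_mul_Gamma_add_half y
    have p1 : Real.Gamma y ≠ 0 := (Real.Gamma_pos_of_pos hy).ne'
    have p2 : Real.Gamma (y + 1/2) ≠ 0 := (Real.Gamma_pos_of_pos (by linarith)).ne'
    have p3 : Real.Gamma (2*y) ≠ 0 := (Real.Gamma_pos_of_pos (by linarith)).ne'
    have p4 : (0:ℝ) < Real.sqrt π := Real.sqrt_pos.mpr Real.pi_pos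
    have := congrArg Real.log e1
    rw [Real.log_mul p1 p2, Real.log_mul (mul_ne_zero p3 (by positivity)) p4.ne',
      Real.log_mul p3 (by positivity), Real.log_rpow (by norm_num)] at this
    rw [this]
    ring
  have := heq.deriv_eq
  rw [hL.deriv, hR.deriv] at this
  rw [this]
  ring

lemma trigamma_dup {x : ℝ} (hx : 0 < x) :
    trigamma x + trigamma (x + 1/2) = 4 * trigamma (2 * x) := by
  have k1 := pos_nonpole hx
  have k2 := pos_nonpole (by linarith : (0:ℝ) < x + 1/2)
  have k3 := pos_nonpole (by linarith : (0:ℝ) < 2 * x)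
  have hL : HasDerivAt (fun y => digamma y + digamma (y + 1/2))
      (trigamma x + trigamma (x + 1/2)) x :=
    (hasDerivAt_digamma k1).add (HasDerivAt.comp_add_const x (1/2) (hasDerivAt_digamma k2))
  have h2y : HasDerivAt (fun y : ℝ => 2 * y) 2 x := by
    simpa using (hasDerivAt_id x).const_mul (2:ℝ)
  have hR : HasDerivAt (fun y => 2 * digamma (2 * y) - 2 * Real.log 2)
      (2 * (trigamma (2*x) * 2)) x :=
    ((((hasDerivAt_digamma k3).comp x h2y)).const_mul 2).sub_const (2 * Real.log 2)
  have heq : (fun y => digamma y + digamma (y + 1/2))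
      =ᶠ[𝓝 x] fun y => 2 * digamma (2 * y) - 2 * Real.log 2 := by
    filter_upwards [eventually_gt_nhds hx] with y hy
    exact digamma_dup hy
  have := heq.deriv_eq
  rw [hL.deriv, hR.deriv] at this
  rw [this]
  ring

lemma trigamma_one_half : trigamma (1/2 : ℝ) = 3 * trigamma 1 := by
  have := trigamma_dup (by norm_num : (0:ℝ) < 1/2)
  norm_num at this
  linarith

noncomputable def hh (n : ℕ) : ℝ := ∑ i ∈ Finset.range n, ((i:ℝ) + 1)⁻¹
noncomputable def gg (n : ℕ) : ℝ := ∑ i ∈ Finset.range n, ((i:ℝ) + 1/2)⁻¹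
noncomputable def ssum (n : ℕ) : ℝ := ∑ i ∈ Finset.range n, (((i:ℝ) + 1/2) ^ 2)⁻¹

lemma hh_succ (n : ℕ) : hh (n+1) = hh n + ((n:ℝ) + 1)⁻¹ := by
  simp [hh, Finset.sum_range_succ]
lemma gg_succ (n : ℕ) : gg (n+1) = gg n + ((n:ℝ) + 1/2)⁻¹ := by
  simp [gg, Finset.sum_range_succ]
lemma ssum_succ (n : ℕ) : ssum (n+1) = ssum n + (((n:ℝ) + 1/2) ^ 2)⁻¹ := by
  simp [ssum, Finset.sum_range_succ]

lemma neg_half_nonpole (m : ℕ) : ∀ k : ℕ, (1/2 : ℝ) - ((m:ℝ) + 1) ≠ -(k:ℝ) := by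
  intro k h
  have h2 : (2*k + 1 : ℝ) = 2*(m+1) := by linarith
  have h3 : (2*k + 1 : ℕ) = 2*(m+1) := by exact_mod_cast h2
  omega

lemma digamma_pos_half (m : ℕ) : digamma ((m:ℝ) + 1/2) = digamma (1/2) + gg m := by
  induction m with
  | zero => simp [gg]
  | succ n ih =>
    have hrec := digamma_add_one (pos_nonpole (by positivity : (0:ℝ) < (n:ℝ) + 1/2))
    have harg : ((n+1:ℕ):ℝ) + 1/2 = ((n:ℝ) + 1/2) + 1 := by push_cast; ring
    rw [harg, hrec, ih, gg_succ]
    ring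

lemma digamma_neg_half (m : ℕ) : digamma ((1/2:ℝ) - (m:ℝ)) = digamma (1/2) + gg m := by
  induction m with
  | zero => simp [gg]
  | succ n ih =>
    have hrec := digamma_add_one (neg_half_nonpole n)
    rw [show ((1/2:ℝ) - ((n:ℝ)+1)) + 1 = (1/2:ℝ) - (n:ℝ) by ring, ih] at hrec
    have hinv : ((1/2:ℝ) - ((n:ℝ)+1))⁻¹ = -((n:ℝ) + 1/2)⁻¹ := by
      rw [show (1/2:ℝ) - ((n:ℝ)+1) = -((n:ℝ) + 1/2) by ring, inv_neg]
    rw [hinv] at hrec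
    rw [show ((n+1:ℕ):ℝ) = (n:ℝ) + 1 by push_cast; ring, gg_succ]
    linarith

lemma digamma_nat (n : ℕ) : digamma ((n:ℝ) + 1) = digamma 1 + hh n := by
  induction n with
  | zero => simp [hh]
  | succ n ih =>
    have hrec := digamma_add_one (pos_nonpole (by positivity : (0:ℝ) < (n:ℝ) + 1))
    rw [show ((n+1:ℕ):ℝ) + 1 = ((n:ℝ) + 1) + 1 by push_cast; ring, hrec, ih, hh_succ]
    ring

lemma trigamma_pos_half (m : ℕ) : trigamma ((m:ℝ) + 1/2) = trigamma (1/2) - ssum m := by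
  induction m with
  | zero => simp [ssum]
  | succ n ih =>
    have hrec := trigamma_add_one (pos_nonpole (by positivity : (0:ℝ) < (n:ℝ) + 1/2))
    rw [show ((n+1:ℕ):ℝ) + 1/2 = ((n:ℝ) + 1/2) + 1 by push_cast; ring, hrec, ih, ssum_succ]
    ring

lemma hh_add (a b : ℕ) : hh (a + b) = hh a + ∑ i ∈ Finset.range b, ((a:ℝ) + i + 1)⁻¹ := by
  induction b with
  | zero => simp
  | succ b ih =>
    rw [show a + (b+1) = (a+b)+1 by ring, hh_succ, ih, Finset.sum_range_succ]
    push_cast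
    ring

lemma hh_reflect (n : ℕ) : ∑ i ∈ Finset.range n, ((n:ℝ) - (i:ℝ))⁻¹ = hh n := by
  rw [hh, ← Finset.sum_range_reflect (fun j => ((j:ℝ) + 1)⁻¹) n]
  apply Finset.sum_congr rfl
  intro i hi
  simp only [Finset.mem_range] at hi
  have h1 : n - 1 - i = n - (i+1) := by omega
  have h2 : ((n - (i+1) : ℕ) : ℝ) = (n:ℝ) - ((i:ℝ)+1) := by
    rw [Nat.cast_sub (by omega)]
    push_cast
    ring
  rw [h1, h2]
  ring_nf

lemma sum_shift_inv (j : ℕ) :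
    ∑ i ∈ Finset.range (j+1), ((j:ℝ)+2+i)⁻¹ = hh (2*j+2) - hh (j+1) := by
  have h := hh_add (j+1) (j+1)
  rw [show (j+1)+(j+1) = 2*j+2 by ring] at h
  rw [h]
  have : ∀ i ∈ Finset.range (j+1), (((j+1:ℕ):ℝ) + i + 1)⁻¹ = ((j:ℝ)+2+i)⁻¹ := by
    intro i _
    push_cast
    ring_nf
  rw [Finset.sum_congr rfl this]
  ring

lemma sum_reflect_inv (j : ℕ) :
    ∑ i ∈ Finset.range (j+1), ((j:ℝ)+1-i)⁻¹ = hh (j+1) := by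
  have h := hh_reflect (j+1)
  rw [← h]
  apply Finset.sum_congr rfl
  intro i _
  push_cast
  ring_nf

lemma inner_pf (j : ℕ) :
    ∑ i ∈ Finset.range (j+1), (((j:ℝ)+2+i)⁻¹ - ((j:ℝ)+1-i)⁻¹) * ((i:ℝ)+1/2)⁻¹
      = -(hh (2*j+2)) * ((j:ℝ)+3/2)⁻¹ := by
  have key : ∀ i ∈ Finset.range (j+1),
      (((j:ℝ)+2+i)⁻¹ - ((j:ℝ)+1-i)⁻¹) * ((i:ℝ)+1/2)⁻¹
        = (-((j:ℝ)+2+i)⁻¹ - ((j:ℝ)+1-i)⁻¹) * ((j:ℝ)+3/2)⁻¹ := by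
    intro i hi
    simp only [Finset.mem_range] at hi
    have hi' : (i:ℝ) ≤ j := by exact_mod_cast Nat.lt_succ_iff.mp hi
    have d1 : ((j:ℝ)+2+i) ≠ 0 := by positivity
    have d2 : ((j:ℝ)+1-i) ≠ 0 := ne_of_gt (by linarith)
    have d3 : ((i:ℝ)+1/2) ≠ 0 := by positivity
    have d4 : ((j:ℝ)+3/2) ≠ 0 := by positivity
    field_simp
    ring
  rw [Finset.sum_congr rfl key, ← Finset.sum_mul, Finset.sum_sub_distrib,
    Finset.sum_neg_distrib, sum_shift_inv, sum_reflect_inv]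
  ring

lemma A_lemma (j : ℕ) :
    ∑ i ∈ Finset.range (j+1), (hh (j+1+i) - hh (j-i)) * ((i:ℝ)+1/2)⁻¹
      = (1/2) * ssum (j+1) := by
  induction j with
  | zero =>
    simp only [Finset.sum_range_one, ssum, hh, Finset.range_one]
    norm_num
  | succ j ih =>
    rw [Finset.sum_range_succ]
    have hsplit : ∀ i ∈ Finset.range (j+1),
        (hh (j+1+1+i) - hh (j+1-i)) * ((i:ℝ)+1/2)⁻¹
          = (hh (j+1+i) - hh (j-i)) * ((i:ℝ)+1/2)⁻¹
            + (((j:ℝ)+2+i)⁻¹ - ((j:ℝ)+1-i)⁻¹) * ((i:ℝ)+1/2)⁻¹ := by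
      intro i hi
      simp only [Finset.mem_range] at hi
      have e1 : hh (j+1+1+i) = hh (j+1+i) + ((j:ℝ)+2+i)⁻¹ := by
        rw [show j+1+1+i = (j+1+i)+1 by ring, hh_succ]
        push_cast
        ring_nf
      have e2 : hh (j+1-i) = hh (j-i) + ((j:ℝ)+1-i)⁻¹ := by
        rw [show j+1-i = (j-i)+1 by omega, hh_succ, Nat.cast_sub (by omega)]
        ring_nf
      rw [e1, e2]
      ring
    rw [Finset.sum_congr rfl hsplit, Finset.sum_add_distrib, ih, inner_pf]
    have h0 : j+1-(j+1) = 0 := by omega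
    have h1 : j+1+1+(j+1) = 2*j+3 := by ring
    have h2 : hh (2*j+3) = hh (2*j+2) + (2*(j:ℝ)+3)⁻¹ := by
      rw [show 2*j+3 = (2*j+2)+1 from rfl, hh_succ]
      push_cast
      ring_nf
    have h3 : ssum (j+1+1) = ssum (j+1) + (((j:ℝ)+3/2)^2)⁻¹ := by
      rw [ssum_succ]
      push_cast
      ring_nf
    rw [h0, h1, h2, h3]
    simp only [hh, Finset.range_zero, Finset.sum_empty, sub_zero]
    have c1 : ((j+1:ℕ):ℝ) + 1/2 = (j:ℝ) + 3/2 := by push_cast; ring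
    rw [c1]
    have d1 : ((j:ℝ)+3/2) ≠ 0 := by positivity
    have d2 : (2*(j:ℝ)+3) ≠ 0 := by positivity
    field_simp
    ring

lemma B_lemma (j : ℕ) :
    ∑ i ∈ Finset.range (j+1), (hh (j-i) + (hh (2*j+1) - hh (j+1+i))) * ((i:ℝ)+1/2)⁻¹
      = gg (j+1) * hh (2*j+1) - (1/2) * ssum (j+1) := by
  have key : ∀ i ∈ Finset.range (j+1),
      (hh (j-i) + (hh (2*j+1) - hh (j+1+i))) * ((i:ℝ)+1/2)⁻¹
        = hh (2*j+1) * ((i:ℝ)+1/2)⁻¹ - (hh (j+1+i) - hh (j-i)) * ((i:ℝ)+1/2)⁻¹ := by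
    intro i _
    ring
  rw [Finset.sum_congr rfl key, Finset.sum_sub_distrib, ← Finset.mul_sum, A_lemma]
  have : ∑ i ∈ Finset.range (j+1), ((i:ℝ)+1/2)⁻¹ = gg (j+1) := rfl
  rw [this]
  ring

lemma gg_ite {j m : ℕ} (hm : m < j) :
    gg (m+1) = ∑ i ∈ Finset.range (j+1), if i ≤ m then ((i:ℝ)+1/2)⁻¹ else 0 := by
  have hf : (Finset.range (j+1)).filter (fun i => i ≤ m) = Finset.range (m+1) := by
    ext i
    simp only [Finset.mem_filter, Finset.mem_range]
    omega
  rw [← Finset.sum_filter, hf, gg]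

lemma ico_filter {i j : ℕ} : (Finset.range j).filter (fun m => i ≤ m) = Finset.Ico i j := by
  ext m
  simp only [Finset.mem_filter, Finset.mem_range, Finset.mem_Ico]
  omega

lemma eval_refl_part {i j : ℕ} (hij : i ≤ j) :
    ∑ m ∈ Finset.Ico i j, ((j:ℝ)-m)⁻¹ = hh (j-i) := by
  rw [Finset.sum_Ico_eq_sum_range, ← hh_reflect (j-i)]
  apply Finset.sum_congr rfl
  intro d _
  rw [Nat.cast_sub hij]
  push_cast
  ring_nf

lemma eval_shift_part {i j : ℕ} (hij : i ≤ j) :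
    ∑ m ∈ Finset.Ico i j, ((j:ℝ)+2+m)⁻¹ = hh (2*j+1) - hh (j+1+i) := by
  have h := hh_add (j+1+i) (j-i)
  rw [show (j+1+i)+(j-i) = 2*j+1 by omega] at h
  rw [Finset.sum_Ico_eq_sum_range, show j - i = j - i from rfl]
  rw [h]
  have : ∀ d ∈ Finset.range (j-i), (((j+1+i:ℕ):ℝ) + d + 1)⁻¹ = ((j:ℝ)+2+(i+d:ℕ))⁻¹ := by
    intro d _
    push_cast
    ring_nf
  rw [Finset.sum_congr rfl this]
  ring

lemma swap_lemma (j : ℕ) :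
    ∑ m ∈ Finset.range j, gg (m+1) * ((j:ℝ)-m)⁻¹
      + ∑ e ∈ Finset.range j, gg (e+1) * ((j:ℝ)+2+e)⁻¹
      = gg (j+1) * hh (2*j+1) - (1/2) * ssum (j+1) := by
  have s1 : ∑ m ∈ Finset.range j, gg (m+1) * ((j:ℝ)-m)⁻¹
      = ∑ i ∈ Finset.range (j+1), ((i:ℝ)+1/2)⁻¹ * hh (j-i) := by
    have e1 : ∀ m ∈ Finset.range j, gg (m+1) * ((j:ℝ)-m)⁻¹
        = ∑ i ∈ Finset.range (j+1), (if i ≤ m then ((i:ℝ)+1/2)⁻¹ * ((j:ℝ)-m)⁻¹ else 0) := by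
      intro m hm
      simp only [Finset.mem_range] at hm
      rw [gg_ite hm, Finset.sum_mul]
      apply Finset.sum_congr rfl
      intro i _
      rw [ite_mul, zero_mul]
    rw [Finset.sum_congr rfl e1, Finset.sum_comm]
    apply Finset.sum_congr rfl
    intro i hi
    simp only [Finset.mem_range] at hi
    rw [← Finset.sum_filter, ico_filter, ← Finset.mul_sum,
      eval_refl_part (Nat.lt_succ_iff.mp hi)]
  have s2 : ∑ e ∈ Finset.range j, gg (e+1) * ((j:ℝ)+2+e)⁻¹
      = ∑ i ∈ Finset.range (j+1), ((i:ℝ)+1/2)⁻¹ * (hh (2*j+1) - hh (j+1+i)) := by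
    have e1 : ∀ m ∈ Finset.range j, gg (m+1) * ((j:ℝ)+2+m)⁻¹
        = ∑ i ∈ Finset.range (j+1), (if i ≤ m then ((i:ℝ)+1/2)⁻¹ * ((j:ℝ)+2+m)⁻¹ else 0) := by
      intro m hm
      simp only [Finset.mem_range] at hm
      rw [gg_ite hm, Finset.sum_mul]
      apply Finset.sum_congr rfl
      intro i _
      rw [ite_mul, zero_mul]
    rw [Finset.sum_congr rfl e1, Finset.sum_comm]
    apply Finset.sum_congr rfl
    intro i hi
    simp only [Finset.mem_range] at hi
    rw [← Finset.sum_filter, ico_filter, ← Finset.mul_sum,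
      eval_shift_part (Nat.lt_succ_iff.mp hi)]
  rw [s1, s2, ← Finset.sum_add_distrib, ← B_lemma]
  apply Finset.sum_congr rfl
  intro i _
  ring

theorem sum_digamma_half_integer (j : ℕ) (β : ℝ) (hβ : β = j + 1/2) :
    ∑ k ∈ Finset.Icc 1 (2 * j + 1), digamma (k - β) / k =
      (1 / 2) * trigamma (β + 1) + digamma (β + 1) * (digamma (2 * β + 1) - digamma 1)
        - (3 / 2) * trigamma 1 := by
  subst hβ
  have hv1 : digamma ((j:ℝ) + 1/2 + 1) = digamma (1/2) + gg (j+1) := by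
    have h := digamma_pos_half (j+1)
    rw [show ((j+1:ℕ):ℝ) + 1/2 = (j:ℝ) + 1/2 + 1 by push_cast; ring] at h
    exact h
  have hv2 : digamma (2 * ((j:ℝ) + 1/2) + 1) = digamma 1 + hh (2*j+1) := by
    have h := digamma_nat (2*j+1)
    rw [show ((2*j+1:ℕ):ℝ) + 1 = 2 * ((j:ℝ) + 1/2) + 1 by push_cast; ring] at h
    exact h
  have hv3 : trigamma ((j:ℝ) + 1/2 + 1) = 3 * trigamma 1 - ssum (j+1) := by
    have h := trigamma_pos_half (j+1)
    rw [show ((j+1:ℕ):ℝ) + 1/2 = (j:ℝ) + 1/2 + 1 by push_cast; ring, trigamma_one_half] at h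
    exact h
  rw [hv1, hv2, hv3]
  -- Decompose the left-hand side
  have h0 : Finset.Icc 1 (2*j+1) = Finset.Ico 1 (2*j+2) := (Finset.Ico_add_one_right_eq_Icc 1 (2*j+1)).symm
  rw [h0]
  have hsplit1 : ∑ k ∈ Finset.Ico 1 (2*j+2), digamma ((k:ℝ) - ((j:ℝ) + 1/2)) / (k:ℝ)
      = ∑ k ∈ Finset.Ico 1 (j+1), digamma ((k:ℝ) - ((j:ℝ) + 1/2)) / (k:ℝ)
        + ∑ k ∈ Finset.Ico (j+1) (2*j+2), digamma ((k:ℝ) - ((j:ℝ) + 1/2)) / (k:ℝ) :=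
    (Finset.sum_Ico_consecutive _ (by omega) (by omega)).symm
  have hsplit2 : ∑ k ∈ Finset.Ico (j+1) (2*j+2), digamma ((k:ℝ) - ((j:ℝ) + 1/2)) / (k:ℝ)
      = digamma (((j+1:ℕ):ℝ) - ((j:ℝ) + 1/2)) / ((j+1:ℕ):ℝ)
        + ∑ k ∈ Finset.Ico (j+2) (2*j+2), digamma ((k:ℝ) - ((j:ℝ) + 1/2)) / (k:ℝ) := by
    rw [Finset.sum_eq_sum_Ico_succ_bot (by omega)]
  rw [hsplit1, hsplit2]
  -- Part A : k from 1 to j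
  have hA : ∑ k ∈ Finset.Ico 1 (j+1), digamma ((k:ℝ) - ((j:ℝ) + 1/2)) / (k:ℝ)
      = ∑ m ∈ Finset.range j, (digamma (1/2) + gg (m+1)) * ((j:ℝ)-m)⁻¹ := by
    rw [Finset.sum_Ico_eq_sum_range]
    simp only [Nat.add_sub_cancel]
    rw [← Finset.sum_range_reflect (fun d => digamma (((1+d:ℕ):ℝ) - ((j:ℝ) + 1/2)) / ((1+d:ℕ):ℝ)) j]
    apply Finset.sum_congr rfl
    intro m hm
    simp only [Finset.mem_range] at hm
    have h1 : 1 + (j - 1 - m) = j - m := by omega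
    have h2 : ((j-m:ℕ):ℝ) = (j:ℝ) - m := by
      rw [Nat.cast_sub (by omega)]
    rw [h1, h2, show (j:ℝ) - m - ((j:ℝ)+1/2) = 1/2 - ((m+1:ℕ):ℝ) by push_cast; ring,
      digamma_neg_half (m+1), div_eq_mul_inv]
  -- Part B : middle term k = j+1
  have hB : digamma (((j+1:ℕ):ℝ) - ((j:ℝ) + 1/2)) / ((j+1:ℕ):ℝ)
      = digamma (1/2) * ((j:ℝ)+1)⁻¹ := by
    rw [show ((j+1:ℕ):ℝ) - ((j:ℝ) + 1/2) = (1/2:ℝ) by push_cast; ring, div_eq_mul_inv]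
    push_cast
    ring
  -- Part C : k from j+2 to 2j+1
  have hC : ∑ k ∈ Finset.Ico (j+2) (2*j+2), digamma ((k:ℝ) - ((j:ℝ) + 1/2)) / (k:ℝ)
      = ∑ e ∈ Finset.range j, (digamma (1/2) + gg (e+1)) * ((j:ℝ)+2+e)⁻¹ := by
    rw [Finset.sum_Ico_eq_sum_range, show 2*j+2-(j+2) = j by omega]
    apply Finset.sum_congr rfl
    intro e _
    rw [show ((j+2+e:ℕ):ℝ) - ((j:ℝ)+1/2) = ((e+1:ℕ):ℝ) + 1/2 by push_cast; ring,
      digamma_pos_half (e+1), div_eq_mul_inv]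
    push_cast
    ring
  rw [hA, hB, hC]
  -- split constant and gg parts
  have hA' : ∑ m ∈ Finset.range j, (digamma (1/2) + gg (m+1)) * ((j:ℝ)-m)⁻¹
      = digamma (1/2) * hh j + ∑ m ∈ Finset.range j, gg (m+1) * ((j:ℝ)-m)⁻¹ := by
    have : ∀ m ∈ Finset.range j, (digamma (1/2) + gg (m+1)) * ((j:ℝ)-m)⁻¹
        = digamma (1/2) * ((j:ℝ)-m)⁻¹ + gg (m+1) * ((j:ℝ)-m)⁻¹ := by
      intro m _; ring
    rw [Finset.sum_congr rfl this, Finset.sum_add_distrib, ← Finset.mul_sum, hh_reflect j]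
  have hC' : ∑ e ∈ Finset.range j, (digamma (1/2) + gg (e+1)) * ((j:ℝ)+2+e)⁻¹
      = digamma (1/2) * (hh (2*j+1) - hh (j+1)) + ∑ e ∈ Finset.range j, gg (e+1) * ((j:ℝ)+2+e)⁻¹ := by
    have e1 : ∀ e ∈ Finset.range j, (digamma (1/2) + gg (e+1)) * ((j:ℝ)+2+e)⁻¹
        = digamma (1/2) * ((j:ℝ)+2+e)⁻¹ + gg (e+1) * ((j:ℝ)+2+e)⁻¹ := by
      intro e _; ring
    have e2 : ∑ e ∈ Finset.range j, ((j:ℝ)+2+e)⁻¹ = hh (2*j+1) - hh (j+1) := by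
      have h := hh_add (j+1) j
      rw [show (j+1)+j = 2*j+1 by ring] at h
      have e3 : ∀ e ∈ Finset.range j, (((j+1:ℕ):ℝ) + e + 1)⁻¹ = ((j:ℝ)+2+e)⁻¹ := by
        intro e _
        push_cast
        ring_nf
      rw [h, Finset.sum_congr rfl e3]
      ring
    rw [Finset.sum_congr rfl e1, Finset.sum_add_distrib, ← Finset.mul_sum, e2]
  rw [hA', hC']
  have hkey := swap_lemma j
  have hsucc := hh_succ j
  linear_combination hkey - digamma (1/2) * hsucc
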